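/- Let (b_n)_{n≥0} be a sequence of rational numbers with b_0 = 1, and define the polynomials p_n(x) = Σ_{i=0}^n (x)_i · B_{n,i} ∈ ℚ[x], where B_{n,i} are the partial Bell polynomials of the sequence (b_n) and (x)_i is the falling factorial. Then p_{n+1}(x) = x · Σ_{k=0}^n C(n,k) p_k(x) holds for all n ≥ 0 if and only if Σ_{k=0}^n s(n,k) b_k = 1 for all n ≥ 0 (i.e., the b_n are the Bell numbers). In particular, the exponential polynomials Φ_n(x) = Σ_{k=0}^n S(n,k) x^k satisfy the recursion Φ_{n+1}(x) = x · Σ_{k=0}^n C(n,k) Φ_k(x). -/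

import Mathlib

/-!
Let `f` be the e.g.f. of `b`. Expanding `f ^ m = (1 + (f - 1)) ^ m` shows
`p_n(m) = n! [t^n] f(t)^m` for every natural `m`. The Bell recursion `b_{n+1} = Σ_k C(n,k) b_k`
says `f' = f e^t`. It follows from the polynomial recursion at `x = 1`, where `p_n(1) = b_n`, and
conversely it gives `(f^m)' = m f^m e^t`, which is the polynomial recursion at `x = m`, hence
everywhere.

For the linear functional `L(x^n) = b_n` the Bell recursion reads `L(x q) = L(q(x + 1))`, so
`(x)_{n+1} = x (x - 1)_n` gives `L((x)_n) = 1`, i.e. `Σ_k s(n,k) b_k = 1`. As `s(n,n) = 1` these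
moments determine `b`, and the Bell numbers satisfy the recursion, which gives the converse.

The recursion of the exponential polynomials is, coefficientwise, `S(n+1,j+1) = Σ_k C(n,k) S(k,j)`.
-/

open Finset Polynomial

/-- Exponential generating function of a sequence. -/
noncomputable def egf {R : Type*} [CommRing R] [Algebra ℚ R] (a : ℕ → R) : PowerSeries R :=
  PowerSeries.mk fun n => ((n.factorial : ℚ)⁻¹) • a n

/-- Formal composition of power series (the correct composition when the inner
series `h` has zero constant term, since then `h ^ n` has order at least `n`). -/
noncomputable def psComp {R : Type*} [CommRing R] (g h : PowerSeries R) : PowerSeries R :=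
  PowerSeries.mk fun m =>
    ∑ n ∈ Finset.range (m + 1), (PowerSeries.coeff (R := R) n g) * (PowerSeries.coeff (R := R) m (h ^ n))

/-- Partial Bell polynomials of a sequence `a` (with `a 0 = 1`):
`B_{n,k} = (n!/k!) · [t^n] (f(t) - 1)^k` where `f` is the e.g.f. of `a`. -/
noncomputable def bellPartial {R : Type*} [CommRing R] [Algebra ℚ R] (a : ℕ → R) (n k : ℕ) : R :=
  ((n.factorial : ℚ) / (k.factorial : ℚ)) • (PowerSeries.coeff (R := R) n ((egf a - 1) ^ k))

/-- Stirling numbers of the second kind. -/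
def stirling2 : ℕ → ℕ → ℕ
  | 0, 0 => 1
  | 0, _ + 1 => 0
  | _ + 1, 0 => 0
  | n + 1, k + 1 => (k + 1) * stirling2 n (k + 1) + stirling2 n k

/-- Bell numbers. -/
def bellNum (n : ℕ) : ℕ := ∑ k ∈ Finset.range (n + 1), stirling2 n k

/-- Signed Stirling numbers of the first kind, defined as the coefficients of the
falling factorial `x (x-1) ⋯ (x-n+1) = Σ_k s(n,k) x^k`. -/
noncomputable def stirling1 (n k : ℕ) : ℚ := (descPochhammer ℚ n).coeff k

theorem stirling2_eq_stirlingSecond : ∀ n k, stirling2 n k = Nat.stirlingSecond n k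
  | 0, 0 | 0, _ + 1 | _ + 1, 0 => rfl
  | n + 1, k + 1 => by
    rw [stirling2, Nat.stirlingSecond_succ_succ, stirling2_eq_stirlingSecond n (k + 1),
      stirling2_eq_stirlingSecond n k]

theorem Nat.stirlingSecond_succ_succ_eq_sum_choose_mul (n j : ℕ) :
    Nat.stirlingSecond (n + 1) (j + 1) =
      ∑ k ∈ range (n + 1), n.choose k * Nat.stirlingSecond k j := by
  induction n generalizing j with
  | zero => cases j <;> simp [Nat.stirlingSecond_succ_succ]
  | succ n ih =>
    have shifted : ∑ k ∈ range (n + 1), n.choose k * Nat.stirlingSecond (k + 1) j =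
        j * Nat.stirlingSecond (n + 1) (j + 1) + Nat.stirlingSecond (n + 1) j := by
      cases j with
      | zero => simp
      | succ i =>
        rw [ih, ih, Finset.mul_sum, ← Finset.sum_add_distrib]
        refine Finset.sum_congr rfl fun k _ => ?_
        rw [Nat.stirlingSecond_succ_succ]
        ring
    have pascal := Finset.sum_choose_succ_mul (R := ℕ) (fun k _ => Nat.stirlingSecond k j) n
    simp only [Nat.cast_id] at pascal
    rw [pascal, ← ih, shifted, Nat.stirlingSecond_succ_succ]
    ring

noncomputable def touchard (R : Type*) [CommSemiring R] (n : ℕ) : R[X] :=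
  ∑ k ∈ range (n + 1), C (Nat.stirlingSecond n k : R) * X ^ k

theorem coeff_touchard (R : Type*) [CommSemiring R] (n j : ℕ) :
    (touchard R n).coeff j = Nat.stirlingSecond n j := by
  simp only [touchard, finsetSum_coeff, coeff_C_mul_X_pow, Finset.sum_ite_eq, Finset.mem_range]
  split_ifs with h
  · rfl
  · rw [Nat.stirlingSecond_eq_zero_of_lt (by omega), Nat.cast_zero]

theorem touchard_succ (R : Type*) [CommSemiring R] (n : ℕ) :
    touchard R (n + 1) = X * ∑ k ∈ range (n + 1), C (n.choose k : R) * touchard R k := by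
  ext (_ | j)
  · simp [coeff_touchard]
  · simp [coeff_touchard, Nat.stirlingSecond_succ_succ_eq_sum_choose_mul]

def SatisfiesBellRecursion {R : Type*} [Semiring R] (b : ℕ → R) : Prop :=
  ∀ n, b (n + 1) = ∑ k ∈ range (n + 1), (n.choose k : R) * b k

theorem Nat.bell_succ_eq_sum_choose_mul (n : ℕ) :
    Nat.bell (n + 1) = ∑ k ∈ range (n + 1), n.choose k * Nat.bell k := by
  rw [Nat.bell_succ, ← Nat.range_succ_eq_Iic, ← Finset.sum_range_reflect]
  refine Finset.sum_congr rfl fun k hk => ?_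
  rw [Finset.mem_range] at hk
  rw [Nat.add_sub_cancel, Nat.choose_symm (by omega), Nat.sub_sub_self (by omega)]

theorem satisfiesBellRecursion_natCast_bell (R : Type*) [Semiring R] :
    SatisfiesBellRecursion fun n => (Nat.bell n : R) := by
  intro n
  simp only [Nat.bell_succ_eq_sum_choose_mul, Nat.cast_sum, Nat.cast_mul]

section Moments

variable {R : Type*} [CommRing R]

noncomputable def momentFunctional (b : ℕ → R) : R[X] →ₗ[R] R :=
  Polynomial.lsum fun n => LinearMap.id.smulRight (b n)

theorem momentFunctional_monomial (b : ℕ → R) (n : ℕ) (c : R) :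
    momentFunctional b (monomial n c) = c * b n := by
  simp [momentFunctional]

theorem momentFunctional_apply (b : ℕ → R) (q : R[X]) :
    momentFunctional b q = ∑ k ∈ range (q.natDegree + 1), q.coeff k * b k := by
  rw [momentFunctional, lsum_apply, sum_over_range]
  · rfl
  · simp

theorem momentFunctional_X_mul {b : ℕ → R} (hb : SatisfiesBellRecursion b) (q : R[X]) :
    momentFunctional b (X * q) = momentFunctional b (q.comp (X + 1)) := by
  induction q using Polynomial.induction_on' with
  | add p q hp hq => rw [mul_add, add_comp, map_add, map_add, hp, hq]
  | monomial n c =>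
    rw [X_mul_monomial, momentFunctional_monomial, hb n, monomial_comp, add_pow, Finset.mul_sum,
      Finset.mul_sum, map_sum]
    refine Finset.sum_congr rfl fun k _ => ?_
    simp only [one_pow, mul_one, ← C_eq_natCast, X_pow_mul, C_mul_X_pow_eq_monomial,
      C_mul_monomial, momentFunctional_monomial]
    ring

theorem momentFunctional_descPochhammer {b : ℕ → R} (hb0 : b 0 = 1)
    (hb : SatisfiesBellRecursion b) (n : ℕ) : momentFunctional b (descPochhammer R n) = 1 := by
  induction n with
  | zero => rw [descPochhammer_zero, ← monomial_zero_one, momentFunctional_monomial, hb0, one_mul]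
  | succ n ih =>
    rw [descPochhammer_succ_left, momentFunctional_X_mul hb, comp_assoc, sub_comp, X_comp,
      one_comp, add_sub_cancel_right, comp_X, ih]

end Moments

theorem momentFunctional_descPochhammer_eq_sum (b : ℕ → ℚ) (n : ℕ) :
    momentFunctional b (descPochhammer ℚ n) = ∑ k ∈ range (n + 1), stirling1 n k * b k := by
  rw [momentFunctional_apply, descPochhammer_natDegree]
  rfl

theorem stirling1_self (n : ℕ) : stirling1 n n = 1 := by
  simpa [stirling1, Monic, leadingCoeff, descPochhammer_natDegree] using monic_descPochhammer ℚ n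

theorem eq_of_sum_stirling1_mul_eq {b c : ℕ → ℚ}
    (h : ∀ n, ∑ k ∈ range (n + 1), stirling1 n k * b k =
      ∑ k ∈ range (n + 1), stirling1 n k * c k) : b = c := by
  funext n
  induction n using Nat.strong_induction_on with
  | _ n ih =>
    have hn := h n
    rw [Finset.sum_range_succ, Finset.sum_range_succ, stirling1_self, one_mul, one_mul,
      Finset.sum_congr rfl fun k hk => by rw [ih k (Finset.mem_range.mp hk)]] at hn
    exact add_left_cancel hn

theorem satisfiesBellRecursion_iff_sum_stirling1_mul_eq_one {b : ℕ → ℚ} (hb0 : b 0 = 1) :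
    SatisfiesBellRecursion b ↔ ∀ n, ∑ k ∈ range (n + 1), stirling1 n k * b k = 1 := by
  have moments_eq_one {c : ℕ → ℚ} (hc0 : c 0 = 1) (hc : SatisfiesBellRecursion c) (n : ℕ) :
      ∑ k ∈ range (n + 1), stirling1 n k * c k = 1 := by
    rw [← momentFunctional_descPochhammer_eq_sum, momentFunctional_descPochhammer hc0 hc]
  refine ⟨moments_eq_one hb0, fun hb => ?_⟩
  have bell_moments := moments_eq_one (by simp) (satisfiesBellRecursion_natCast_bell ℚ)
  obtain rfl : b = fun n => (Nat.bell n : ℚ) :=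
    eq_of_sum_stirling1_mul_eq fun n => (hb n).trans (bell_moments n).symm
  exact satisfiesBellRecursion_natCast_bell ℚ

theorem PowerSeries.coeff_one_add_pow {S : Type*} [CommSemiring S] {h : PowerSeries S}
    (hh : PowerSeries.constantCoeff h = 0) (m n : ℕ) :
    PowerSeries.coeff n ((1 + h) ^ m) =
      ∑ i ∈ range (n + 1), (m.choose i : S) * PowerSeries.coeff n (h ^ i) := by
  set f : ℕ → S := fun i => (m.choose i : S) * PowerSeries.coeff n (h ^ i)
  have high_order : ∀ i, n < i → PowerSeries.coeff n (h ^ i) = 0 := fun i hi =>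
    PowerSeries.X_pow_dvd_iff.mp (pow_dvd_pow_of_dvd (PowerSeries.X_dvd_iff.mpr hh) i) n hi
  calc PowerSeries.coeff n ((1 + h) ^ m)
      = ∑ i ∈ range (m + 1), f i := by
        rw [add_comm, add_pow, map_sum]
        refine Finset.sum_congr rfl fun i _ => ?_
        rw [one_pow, mul_one, ← map_natCast PowerSeries.C, PowerSeries.coeff_mul_C, mul_comm]
    _ = ∑ i ∈ range (m + 1 + n), f i := by
        rw [Finset.sum_range_add f (m + 1) n, Finset.sum_eq_zero (s := range n)
          fun i _ => by simp [f, Nat.choose_eq_zero_of_lt (by omega : m < m + 1 + i)], add_zero]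
    _ = ∑ i ∈ range (n + 1 + m), f i := by rw [show m + 1 + n = n + 1 + m by omega]
    _ = ∑ i ∈ range (n + 1), f i := by
        rw [Finset.sum_range_add f (n + 1) m, Finset.sum_eq_zero (s := range m)
          fun i _ => by simp [f, high_order (n + 1 + i) (by omega)], add_zero]

section PowerSeries

variable {R : Type*} [CommRing R] [Algebra ℚ R]

@[simp]
theorem coeff_egf (a : ℕ → R) (n : ℕ) :
    PowerSeries.coeff n (egf a) = (n.factorial : ℚ)⁻¹ • a n := by
  simp [egf]

theorem egf_injective : Function.Injective (egf : (ℕ → R) → PowerSeries R) := by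
  intro a c h
  funext n
  have hn := congrArg (PowerSeries.coeff n) h
  rw [coeff_egf, coeff_egf] at hn
  exact (smul_right_injective R (inv_ne_zero (Nat.cast_ne_zero.mpr n.factorial_ne_zero))) hn

theorem derivative_egf (a : ℕ → R) :
    PowerSeries.derivative R (egf a) = egf fun n => a (n + 1) := by
  ext n
  rw [PowerSeries.coeff_derivative, coeff_egf, coeff_egf, smul_mul_assoc, mul_comm,
    ← Nat.cast_succ, ← nsmul_eq_mul, ← Nat.cast_smul_eq_nsmul ℚ, smul_smul]
  congr 1
  rw [Nat.factorial_succ]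
  push_cast
  field_simp

theorem egf_mul (a c : ℕ → R) :
    egf a * egf c = egf fun n => ∑ k ∈ range (n + 1), (n.choose k : R) * (a k * c (n - k)) := by
  ext n
  rw [PowerSeries.coeff_mul, Finset.Nat.sum_antidiagonal_eq_sum_range_succ
    (fun i j => PowerSeries.coeff i (egf a) * PowerSeries.coeff j (egf c)), coeff_egf,
    Finset.smul_sum]
  refine Finset.sum_congr rfl fun k hk => ?_
  have hk : k ≤ n := Nat.lt_succ_iff.mp (Finset.mem_range.mp hk)
  rw [coeff_egf, coeff_egf, smul_mul_smul_comm, ← nsmul_eq_mul, ← Nat.cast_smul_eq_nsmul ℚ,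
    smul_smul]
  congr 1
  rw [Nat.cast_choose ℚ hk]
  field_simp

theorem C_mul_egf (r : R) (a : ℕ → R) : PowerSeries.C r * egf a = egf fun n => r * a n := by
  ext n
  simp

theorem derivative_egf_eq_C_mul_iff (a : ℕ → R) (r : R) :
    PowerSeries.derivative R (egf a) = PowerSeries.C r * (egf a * egf 1) ↔
      ∀ n, a (n + 1) = r * ∑ k ∈ range (n + 1), (n.choose k : R) * a k := by
  simp only [derivative_egf, egf_mul, Pi.one_apply, mul_one, C_mul_egf, egf_injective.eq_iff,
    funext_iff]

theorem derivative_egf_pow {b : ℕ → R} (hb : SatisfiesBellRecursion b) (m : ℕ) :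
    PowerSeries.derivative R (egf b ^ m) = PowerSeries.C (m : R) * (egf b ^ m * egf 1) := by
  have hb' : PowerSeries.derivative R (egf b) = egf b * egf 1 := by
    simpa using (derivative_egf_eq_C_mul_iff b 1).mpr fun n => by rw [one_mul]; exact hb n
  rw [PowerSeries.derivative_pow, hb', map_natCast]
  cases m with
  | zero => simp
  | succ m => rw [Nat.add_sub_cancel, pow_succ]; ring

end PowerSeries

section FallingBell

variable {R : Type*} [CommRing R] [Algebra ℚ R]

noncomputable def fallingBellPoly (b : ℕ → R) (n : ℕ) : R[X] :=
  ∑ i ∈ range (n + 1), descPochhammer R i * C (bellPartial b n i)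

theorem egf_eval_fallingBellPoly {b : ℕ → R} (hb0 : b 0 = 1) (m : ℕ) :
    egf (fun n => (fallingBellPoly b n).eval (m : R)) = egf b ^ m := by
  have hconst : PowerSeries.constantCoeff (egf b - 1) = 0 := by
    simp [egf, hb0]
  ext n
  rw [← add_sub_cancel (1 : PowerSeries R) (egf b), PowerSeries.coeff_one_add_pow hconst,
    coeff_egf, fallingBellPoly, eval_finsetSum, Finset.smul_sum]
  refine Finset.sum_congr rfl fun i _ => ?_
  rw [eval_mul, eval_C, descPochhammer_eval_eq_descFactorial, bellPartial, ← nsmul_eq_mul,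
    ← Nat.cast_smul_eq_nsmul ℚ, smul_smul, smul_smul, ← nsmul_eq_mul,
    ← Nat.cast_smul_eq_nsmul ℚ]
  congr 1
  rw [Nat.descFactorial_eq_factorial_mul_choose]
  push_cast
  field_simp

theorem fallingBellPoly_eval_one {b : ℕ → R} (hb0 : b 0 = 1) (n : ℕ) :
    (fallingBellPoly b n).eval 1 = b n := by
  have h := egf_eval_fallingBellPoly hb0 1
  rw [pow_one, Nat.cast_one] at h
  exact congrFun (egf_injective h) n

end FallingBell

theorem fallingBellPoly_recursion_iff {b : ℕ → ℚ} (hb0 : b 0 = 1) :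
    (∀ n, fallingBellPoly b (n + 1) =
        X * ∑ k ∈ range (n + 1), C (n.choose k : ℚ) * fallingBellPoly b k) ↔
      SatisfiesBellRecursion b := by
  constructor
  · intro h n
    simpa [fallingBellPoly_eval_one hb0, eval_finsetSum] using congrArg (eval 1) (h n)
  · intro hb n
    refine eq_of_infinite_eval_eq _ _ (Set.infinite_of_injective_forall_mem
      (f := fun m : ℕ => (m : ℚ)) Nat.cast_injective fun m => ?_)
    have hrec := (derivative_egf_eq_C_mul_iff _ _).mp
      ((egf_eval_fallingBellPoly hb0 m).symm ▸ derivative_egf_pow hb m) n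
    simpa [eval_finsetSum] using hrec

/-- The polynomials `p_n(x) = Σ_i (x)_i B_{n,i}(b)` satisfy the recursion
`p_{n+1}(x) = x Σ_k C(n,k) p_k(x)` iff `b` has all falling-factorial moments `1`
(i.e. `b` is the Bell-number sequence); in particular the exponential polynomials
`Φ_n(x) = Σ_k S(n,k) x^k` satisfy `Φ_{n+1}(x) = x Σ_k C(n,k) Φ_k(x)`. -/
theorem bell_polynomial_recursion (b : ℕ → ℚ) (hb0 : b 0 = 1)
    (p : ℕ → Polynomial ℚ)
    (hp : ∀ n, p n = ∑ i ∈ Finset.range (n + 1),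
      descPochhammer ℚ i * Polynomial.C (bellPartial b n i))
    (Φ : ℕ → Polynomial ℚ)
    (hΦ : ∀ n, Φ n = ∑ k ∈ Finset.range (n + 1),
      Polynomial.C (stirling2 n k : ℚ) * Polynomial.X ^ k) :
    ((∀ n : ℕ, p (n + 1) =
        Polynomial.X * ∑ k ∈ Finset.range (n + 1), Polynomial.C (n.choose k : ℚ) * p k) ↔
      (∀ n : ℕ, ∑ k ∈ Finset.range (n + 1), stirling1 n k * b k = 1)) ∧
    (∀ n : ℕ, Φ (n + 1) =
        Polynomial.X * ∑ k ∈ Finset.range (n + 1), Polynomial.C (n.choose k : ℚ) * Φ k) := by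
  obtain rfl : p = fallingBellPoly b := funext hp
  obtain rfl : Φ = touchard ℚ := funext fun n => by
    simp only [hΦ, touchard, stirling2_eq_stirlingSecond]
  exact ⟨(fallingBellPoly_recursion_iff hb0).trans
    (satisfiesBellRecursion_iff_sum_stirling1_mul_eq_one hb0), touchard_succ ℚ⟩
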